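/- arXiv:2502.07769 — 11 statements merged into one kernel-verified Lean document; each statement's English description precedes it below -/
import Mathlib

section
/- Let G be a finite simple graph. Then G has a matching cut if and only if there exists an assignment s : V(G) → Bool which is not constant and such that for every vertex i and every pair of distinct neighbours j, k of i, the three Boolean values ¬s(i), s(j), s(k) are not all equal. -/
/-- A matching cut of a simple graph `G`: a partition of the vertex set into two
nonempty sets `A` and `B` such that every vertex has at most one neighbour
on the opposite side of the partition. -/
def HasMatchingCut {V : Type*} (G : SimpleGraph V) : Prop :=
  ∃ A B : Set V, A.Nonempty ∧ B.Nonempty ∧ Disjoint A B ∧ A ∪ B = Set.univ ∧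
    (∀ v ∈ A, {w | w ∈ B ∧ G.Adj v w}.Subsingleton) ∧
    (∀ v ∈ B, {w | w ∈ A ∧ G.Adj v w}.Subsingleton)

/-!
Read a matching cut as a non-constant colouring `s : V → Bool` in which every vertex has at
most one neighbour of the other colour. Over `Bool`, `!s i = s j = s k` says precisely that `j`
and `k` both have the colour opposite to `i`, so forbidding it for distinct neighbours `j`, `k`
is that same condition.
-/

namespace SimpleGraph

variable {V : Type*} (G : SimpleGraph V)

theorem hasMatchingCut_iff_exists_bool :
    HasMatchingCut G ↔ ∃ s : V → Bool, (∃ u v, s u ≠ s v) ∧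
      ∀ v, {w | G.Adj v w ∧ s w ≠ s v}.Subsingleton := by
  classical
  constructor
  · rintro ⟨A, B, ⟨a, ha⟩, ⟨b, hb⟩, hdisj, huniv, hA, hB⟩
    have hB_eq : B = Aᶜ :=
      (IsCompl.compl_eq ⟨hdisj, codisjoint_iff.mpr huniv⟩).symm
    subst hB_eq
    refine ⟨fun v => decide (v ∈ A), ⟨a, b, by simp_all⟩, fun v => ?_⟩
    by_cases hv : v ∈ A
    · exact (hA v hv).anti fun w ⟨hvw, hw⟩ => ⟨by simp_all, hvw⟩
    · exact (hB v hv).anti fun w ⟨hvw, hw⟩ => ⟨by simp_all, hvw⟩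
  · rintro ⟨s, ⟨u, v, huv⟩, hs⟩
    have hside : ∀ b : Bool, ∃ x, s x = b := by
      intro b
      by_cases hub : s u = b
      · exact ⟨u, hub⟩
      · exact ⟨v, by cases b <;> cases hu : s u <;> cases hv : s v <;> simp_all⟩
    refine ⟨{x | s x = true}, {x | s x = false}, hside true, hside false, ?_, ?_, ?_, ?_⟩
    · exact Set.disjoint_left.mpr fun x hx hx' => by simp_all
    · ext x; cases s x <;> simp
    · exact fun x hx => (hs x).anti fun w ⟨hw, hxw⟩ => ⟨hxw, by simp_all⟩
    · exact fun x hx => (hs x).anti fun w ⟨hw, hxw⟩ => ⟨hxw, by simp_all⟩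

theorem forall_not_allEqual_iff_subsingleton (s : V → Bool) (i : V) :
    (∀ j k, G.Adj i j → G.Adj i k → j ≠ k → ¬ ((!s i) = s j ∧ s j = s k)) ↔
      {w | G.Adj i w ∧ s w ≠ s i}.Subsingleton := by
  have hflip : ∀ j k, ((!s i) = s j ∧ s j = s k) ↔ (s j ≠ s i ∧ s k ≠ s i) := by
    intro j k
    cases s i <;> cases s j <;> cases s k <;> simp
  simp only [hflip, Set.Subsingleton, Set.mem_ofPred_eq]
  constructor
  · intro h j ⟨hij, hj⟩ k ⟨hik, hk⟩
    by_contra hjk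
    exact h j k hij hik hjk ⟨hj, hk⟩
  · intro h j k hij hik hjk ⟨hj, hk⟩
    exact hjk (h ⟨hij, hj⟩ ⟨hik, hk⟩)

end SimpleGraph

theorem stmt0_general {V : Type*} (G : SimpleGraph V) :
    HasMatchingCut G ↔
      ∃ s : V → Bool, (∃ u v : V, s u ≠ s v) ∧
        ∀ i j k : V, G.Adj i j → G.Adj i k → j ≠ k →
          ¬ ((!s i) = s j ∧ s j = s k) := by
  rw [G.hasMatchingCut_iff_exists_bool]
  exact exists_congr fun s => and_congr_right fun _ =>
    forall_congr' fun i => (G.forall_not_allEqual_iff_subsingleton s i).symm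

/-- A finite simple graph `G` has a matching cut iff there is a non-constant
Boolean assignment `s` on the vertices such that for every vertex `i` and every
pair of distinct neighbours `j`, `k` of `i`, the values `¬s i`, `s j`, `s k`
are not all equal. -/
theorem stmt0 {V : Type*} [Fintype V] (G : SimpleGraph V) :
    HasMatchingCut G ↔
      ∃ s : V → Bool, (∃ u v : V, s u ≠ s v) ∧
        ∀ i j k : V, G.Adj i j → G.Adj i k → j ≠ k →
          ¬ ((!s i) = s j ∧ s j = s k) :=
  stmt0_general G
end

section
/- Let d ≥ 1 be an integer and let m be a multigraph on a finite vertex set V, and define the multigraph m' on V by m'(u,v) = min(m(u,v), d + 1). Then m has a multigraph d-cut if and only if m' has a multigraph d-cut. -/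
/-- A multigraph on a vertex set `V` is a symmetric multiplicity function
`m : V → V → ℕ` with no loops. -/
def IsMultigraph {V : Type*} (m : V → V → ℕ) : Prop :=
  (∀ u v, m u v = m v u) ∧ (∀ v, m v v = 0)

/-- `(A, B)` is a multigraph `d`-cut of the multigraph `m`: a partition of the
vertex set into two nonempty parts such that every vertex has at most `d`
edges (counted with multiplicity) going to the other side. -/
def IsMultigraphDCut {V : Type*} [Fintype V] [DecidableEq V]
    (m : V → V → ℕ) (d : ℕ) (A B : Finset V) : Prop :=
  A.Nonempty ∧ B.Nonempty ∧ Disjoint A B ∧ A ∪ B = Finset.univ ∧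
    (∀ a ∈ A, ∑ b ∈ B, m a b ≤ d) ∧ (∀ b ∈ B, ∑ a ∈ A, m a b ≤ d)

/-- The multigraph `m` has a `d`-cut. -/
def HasMultigraphDCut {V : Type*} [Fintype V] [DecidableEq V]
    (m : V → V → ℕ) (d : ℕ) : Prop :=
  ∃ A B : Finset V, IsMultigraphDCut m d A B

theorem Finset.sum_min_succ_le_iff {ι : Type*} (s : Finset ι) (f : ι → ℕ) (d : ℕ) :
    ∑ i ∈ s, min (f i) (d + 1) ≤ d ↔ ∑ i ∈ s, f i ≤ d := by
  by_cases hf : ∀ i ∈ s, f i ≤ d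
  · rw [Finset.sum_congr rfl fun i hi => min_eq_left (Nat.le_succ_of_le (hf i hi))]
  · -- a single term above `d` already makes both sums exceed `d`
    obtain ⟨i, hi, hfi⟩ := not_forall₂.mp hf
    replace hfi : d < f i := not_le.mp hfi
    have hcap : d < ∑ j ∈ s, min (f j) (d + 1) :=
      calc d < min (f i) (d + 1) := by omega
        _ ≤ _ := Finset.single_le_sum (fun j _ => Nat.zero_le (min (f j) (d + 1))) hi
    have hsum : d < ∑ j ∈ s, f j :=
      hfi.trans_le (Finset.single_le_sum (fun j _ => Nat.zero_le (f j)) hi)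
    exact iff_of_false hcap.not_ge hsum.not_ge

theorem isMultigraphDCut_min_succ_iff {V : Type*} [Fintype V] [DecidableEq V]
    (m : V → V → ℕ) (d : ℕ) (A B : Finset V) :
    IsMultigraphDCut (fun u v => min (m u v) (d + 1)) d A B ↔ IsMultigraphDCut m d A B := by
  simp only [IsMultigraphDCut, Finset.sum_min_succ_le_iff]

theorem stmt2_general {V : Type*} [Fintype V] [DecidableEq V]
    (d : ℕ) (m : V → V → ℕ) :
    HasMultigraphDCut m d ↔
      HasMultigraphDCut (fun u v => min (m u v) (d + 1)) d := by
  simp only [HasMultigraphDCut, isMultigraphDCut_min_succ_iff]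

/-- Capping all multiplicities of a multigraph at `d + 1` does not change
whether it has a multigraph `d`-cut. -/
theorem stmt2 {V : Type*} [Fintype V] [DecidableEq V]
    (d : ℕ) (hd : 1 ≤ d) (m : V → V → ℕ) (hm : IsMultigraph m) :
    HasMultigraphDCut m d ↔
      HasMultigraphDCut (fun u v => min (m u v) (d + 1)) d :=
  stmt2_general d m
end

section
/- Let d ≥ 1 be an integer and let m be a multigraph on a finite vertex set V all of whose multiplicities lie in {0, 1, 2}. Define the multigraph m' on V by m'(u,v) = d if m(u,v) = 1, m'(u,v) = d + 1 if m(u,v) = 2, and m'(u,v) = 0 if m(u,v) = 0. Then m has a multigraph matching cut if and only if m' has a multigraph d-cut. -/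
/-! A `1`-cut of `m` and a `d`-cut of `m'` impose the same condition vertex by vertex: the
weights `w 0 = 0`, `w 1 = d`, `w 2 = d + 1` satisfy `w k ≤ d * k` and `(d + 1) * k ≤ 2 * w k`,
so `∑ k ≤ 1` forces `∑ w k ≤ d`, while `∑ k ≥ 2` forces `2 * ∑ w k ≥ 2 * (d + 1)`. -/

def gadgetWeight (d k : ℕ) : ℕ :=
  if k = 0 then 0 else if k = 1 then d else d + 1

section gadgetWeight

variable {d k : ℕ}

lemma gadgetWeight_le_mul (hd : 1 ≤ d) (hk : k ≤ 2) : gadgetWeight d k ≤ d * k := by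
  interval_cases k <;> simp [gadgetWeight]; omega

lemma mul_le_two_mul_gadgetWeight (hd : 1 ≤ d) (hk : k ≤ 2) :
    (d + 1) * k ≤ 2 * gadgetWeight d k := by
  interval_cases k <;> simp [gadgetWeight] <;> omega

lemma sum_le_one_iff_sum_gadgetWeight_le {ι : Type*} (hd : 1 ≤ d) (s : Finset ι) {f : ι → ℕ}
    (hf : ∀ i, f i ≤ 2) :
    ∑ i ∈ s, f i ≤ 1 ↔ ∑ i ∈ s, gadgetWeight d (f i) ≤ d := by
  constructor
  · intro h
    calc ∑ i ∈ s, gadgetWeight d (f i)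
        ≤ ∑ i ∈ s, d * f i := Finset.sum_le_sum fun i _ => gadgetWeight_le_mul hd (hf i)
      _ = d * ∑ i ∈ s, f i := (Finset.mul_sum _ _ _).symm
      _ ≤ d := by simpa using Nat.mul_le_mul_left d h
  · intro h
    have hlt : (d + 1) * ∑ i ∈ s, f i < (d + 1) * 2 :=
      calc (d + 1) * ∑ i ∈ s, f i
          = ∑ i ∈ s, (d + 1) * f i := Finset.mul_sum _ _ _
        _ ≤ ∑ i ∈ s, 2 * gadgetWeight d (f i) :=
            Finset.sum_le_sum fun i _ => mul_le_two_mul_gadgetWeight hd (hf i)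
        _ = 2 * ∑ i ∈ s, gadgetWeight d (f i) := (Finset.mul_sum _ _ _).symm
        _ < (d + 1) * 2 := by omega
    exact Nat.le_of_lt_succ (Nat.lt_of_mul_lt_mul_left hlt)

end gadgetWeight

lemma isMultigraphDCut_gadgetWeight_iff {V : Type*} [Fintype V] [DecidableEq V] {d : ℕ}
    (hd : 1 ≤ d) {m : V → V → ℕ} (h2 : ∀ u v, m u v ≤ 2) (A B : Finset V) :
    IsMultigraphDCut m 1 A B ↔ IsMultigraphDCut (fun u v => gadgetWeight d (m u v)) d A B := by
  unfold IsMultigraphDCut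
  refine and_congr_right' <| and_congr_right' <| and_congr_right' <| and_congr_right' <|
    and_congr ?_ ?_
  · exact forall₂_congr fun a _ => sum_le_one_iff_sum_gadgetWeight_le hd B (h2 a)
  · exact forall₂_congr fun b _ => sum_le_one_iff_sum_gadgetWeight_le hd A (h2 · b)

theorem stmt3_general {V : Type*} [Fintype V] [DecidableEq V]
    (d : ℕ) (hd : 1 ≤ d) (m : V → V → ℕ)
    (h2 : ∀ u v, m u v ≤ 2) :
    HasMultigraphDCut m 1 ↔
      HasMultigraphDCut
        (fun u v => if m u v = 0 then 0 else if m u v = 1 then d else d + 1)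
        d :=
  exists₂_congr fun A B => isMultigraphDCut_gadgetWeight_iff hd h2 A B

/-- Let `m` be a multigraph with all multiplicities in `{0, 1, 2}`, and let
`m'` be obtained by changing every multiplicity `1` into `d` and every
multiplicity `2` into `d + 1`. Then `m` has a multigraph matching cut
(that is, a `1`-cut) if and only if `m'` has a multigraph `d`-cut. -/
theorem stmt3 {V : Type*} [Fintype V] [DecidableEq V]
    (d : ℕ) (hd : 1 ≤ d) (m : V → V → ℕ) (hm : IsMultigraph m)
    (h2 : ∀ u v, m u v ≤ 2) :
    HasMultigraphDCut m 1 ↔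
      HasMultigraphDCut
        (fun u v => if m u v = 0 then 0 else if m u v = 1 then d else d + 1)
        d :=
  stmt3_general d hd m h2
end

section
/- Let m be a multigraph on a finite vertex set V all of whose multiplicities lie in {0, 1, 2}, and let D be the set of unordered pairs {u,v} with m(u,v) = 2. Let G' be the finite simple graph on vertex set V ⊕ D in which two vertices u, v ∈ V are adjacent iff m(u,v) ≥ 1, each element t = {u,v} ∈ D is adjacent exactly to u and v, and no two elements of D are adjacent. Then m has a multigraph matching cut if and only if G' has a matching cut. -/
/-- `(A, B)` is a multigraph matching cut of the multigraph `m`: a partition of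
the vertex set into two nonempty parts such that every vertex has at most one
edge (counted with multiplicity) going to the other side. -/
def IsMultigraphMatchingCut {V : Type*} [Fintype V] [DecidableEq V]
    (m : V → V → ℕ) (A B : Finset V) : Prop :=
  A.Nonempty ∧ B.Nonempty ∧ Disjoint A B ∧ A ∪ B = Finset.univ ∧
    (∀ a ∈ A, ∑ b ∈ B, m a b ≤ 1) ∧ (∀ b ∈ B, ∑ a ∈ A, m a b ≤ 1)

/-- The set `D` of unordered pairs `{u, v}` with `m u v = 2`. -/
def DoublePairs {V : Type*} (m : V → V → ℕ) : Type _ :=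
  {p : Sym2 V // ∃ u v : V, p = s(u, v) ∧ m u v = 2}

/-- The simple graph on `V ⊕ D` obtained from the multigraph `m` by replacing
every double edge by a triangle: `u, v ∈ V` are adjacent iff `m u v ≥ 1`, and
each pair `t = {u, v} ∈ D` is adjacent exactly to `u` and `v`. -/
def Triangulate {V : Type*} (m : V → V → ℕ) (hsymm : ∀ u v, m u v = m v u) :
    SimpleGraph (V ⊕ DoublePairs m) where
  Adj x y :=
    match x, y with
    | Sum.inl u, Sum.inl v => u ≠ v ∧ 1 ≤ m u v
    | Sum.inl u, Sum.inr t => u ∈ t.val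
    | Sum.inr t, Sum.inl u => u ∈ t.val
    | Sum.inr _, Sum.inr _ => False
  symm := by
    constructor
    rintro (u | t) (v | s) h
    · exact ⟨Ne.symm h.1, by rw [hsymm]; exact h.2⟩
    · exact h
    · exact h
    · exact h
  loopless := by
    constructor
    rintro (u | t) h
    · exact h.1 rfl
    · exact h

/-!
A multigraph matching cut `(A, B)` never separates the endpoints of a double edge, so every
triangle vertex `t ∈ D` can be put on the side of its endpoints; a vertex of `V` then has the
same neighbours across the cut in both graphs. Conversely, a matching cut of the triangulated
graph restricts to `V`: two single edges from `a` across the cut give `a` two neighbours across,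
and a double edge `{a, b}` across the cut gives `a` or `b` two neighbours across, namely the
other endpoint and the triangle vertex `{a, b}`, whichever side that lies on.
-/

open Finset

section Triangulation

variable {V : Type*} {m : V → V → ℕ}

section TriangulateAdj

variable {hsymm : ∀ u v, m u v = m v u}

@[simp]
lemma triangulate_adj_inl_inl {u v : V} :
    (Triangulate m hsymm).Adj (.inl u) (.inl v) ↔ u ≠ v ∧ 1 ≤ m u v := Iff.rfl

@[simp]
lemma triangulate_not_adj_inr_inr {s t : DoublePairs m} :
    ¬ (Triangulate m hsymm).Adj (.inr s) (.inr t) := id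

end TriangulateAdj

lemma DoublePairs.exists_mem (t : DoublePairs m) : ∃ u, u ∈ t.val := by
  obtain ⟨u, v, ht, -⟩ := t.2
  exact ⟨u, ht ▸ Sym2.mem_mk_left u v⟩

def liftSide (m : V → V → ℕ) (S : Finset V) : Set (V ⊕ DoublePairs m) :=
  {x | Sum.elim (· ∈ S) (fun t => ∀ u ∈ t.val, u ∈ S) x}

@[simp]
lemma mem_liftSide_inl {S : Finset V} {v : V} : Sum.inl v ∈ liftSide m S ↔ v ∈ S := Iff.rfl

section Forward

variable {A B : Finset V}

lemma disjoint_liftSide (h : Disjoint A B) : Disjoint (liftSide m A) (liftSide m B) := by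
  refine Set.disjoint_left.mpr ?_
  rintro (v | t) hA hB
  · exact disjoint_left.mp h hA hB
  · obtain ⟨u, hu⟩ := t.exists_mem
    exact disjoint_left.mp h (hA u hu) (hB u hu)

lemma liftSide_union_liftSide [Fintype V] [DecidableEq V] (hsymm : ∀ u v, m u v = m v u)
    (hcov : A ∪ B = univ) (hA : ∀ a ∈ A, ∑ b ∈ B, m a b ≤ 1) :
    liftSide m A ∪ liftSide m B = Set.univ := by
  have hmem (v : V) : v ∈ A ∨ v ∈ B := mem_union.mp (hcov ▸ mem_univ v)
  have not_across {u v : V} (huA : u ∈ A) (hvB : v ∈ B) : m u v ≠ 2 := by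
    have := (single_le_sum (fun b _ => Nat.zero_le (m u b)) hvB).trans (hA u huA)
    omega
  refine Set.eq_univ_of_forall ?_
  rintro (v | ⟨_, u, v, rfl, huv⟩)
  · exact hmem v
  · have hvu : m v u = 2 := hsymm u v ▸ huv
    rcases hmem u with hu | hu <;> rcases hmem v with hv | hv
    · left; exact fun w hw => (Sym2.mem_iff.mp hw).elim (· ▸ hu) (· ▸ hv)
    · exact absurd huv (not_across hu hv)
    · exact absurd hvu (not_across hv hu)
    · right; exact fun w hw => (Sym2.mem_iff.mp hw).elim (· ▸ hu) (· ▸ hv)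

lemma subsingleton_liftSide_adj (hsymm : ∀ u v, m u v = m v u) (hdisj : Disjoint A B)
    (hA : ∀ a ∈ A, ∑ b ∈ B, m a b ≤ 1) :
    ∀ x ∈ liftSide m A,
      {y | y ∈ liftSide m B ∧ (Triangulate m hsymm).Adj x y}.Subsingleton := by
  rintro (a | t) hx
  · have hsupp : {b | b ∈ B ∧ m a b ≠ 0}.Subsingleton := fun b₁ hb₁ b₂ hb₂ =>
      (sum_le_one_iff.mp (hA a hx) b₁ b₂ hb₁.1 hb₂.1 hb₁.2 hb₂.2).1
    refine (hsupp.image Sum.inl).anti ?_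
    rintro (b | t) ⟨hy, hadj⟩
    · simp only [mem_liftSide_inl, triangulate_adj_inl_inl] at hy hadj
      exact ⟨b, ⟨hy, by omega⟩, rfl⟩
    · exact absurd (hy a hadj) (disjoint_left.mp hdisj hx)
  · rintro (u | s) ⟨hu, hadj⟩
    · exact absurd hu (disjoint_left.mp hdisj (hx u hadj))
    · exact absurd hadj triangulate_not_adj_inr_inr

lemma IsMultigraphMatchingCut.hasMatchingCut_triangulate [Fintype V] [DecidableEq V]
    (hsymm : ∀ u v, m u v = m v u) (h : IsMultigraphMatchingCut m A B) :
    HasMatchingCut (Triangulate m hsymm) := by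
  obtain ⟨⟨a, ha⟩, ⟨b, hb⟩, hdisj, hcov, hA, hB⟩ := h
  have hB' : ∀ b ∈ B, ∑ a ∈ A, m b a ≤ 1 := fun b hb =>
    (sum_congr rfl fun a _ => hsymm b a).trans_le (hB b hb)
  exact ⟨liftSide m A, liftSide m B, ⟨.inl a, ha⟩, ⟨.inl b, hb⟩, disjoint_liftSide hdisj,
    liftSide_union_liftSide hsymm hcov hA, subsingleton_liftSide_adj hsymm hdisj hA,
    subsingleton_liftSide_adj hsymm hdisj.symm hB'⟩

end Forward

section Backward

variable {hsymm : ∀ u v, m u v = m v u} {A' B' : Set (V ⊕ DoublePairs m)}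

lemma exists_inl_mem_of_subsingleton_adj (hloop : ∀ v, m v v = 0) (hne : A'.Nonempty)
    (hcov : A' ∪ B' = Set.univ)
    (hA' : ∀ x ∈ A', {y | y ∈ B' ∧ (Triangulate m hsymm).Adj x y}.Subsingleton) :
    ∃ v, Sum.inl v ∈ A' := by
  obtain ⟨v | ⟨_, u, v, rfl, huv⟩, hx⟩ := hne
  · exact ⟨v, hx⟩
  by_contra! hnone
  have hB' (w : V) : Sum.inl w ∈ B' :=
    ((hcov ▸ Set.mem_univ (Sum.inl w) : Sum.inl w ∈ A' ∪ B').resolve_left (hnone w))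
  have hne : u ≠ v := by rintro rfl; rw [hloop] at huv; omega
  exact hne (Sum.inl_injective
    (hA' _ hx ⟨hB' u, Sym2.mem_mk_left u v⟩ ⟨hB' v, Sym2.mem_mk_right u v⟩))

lemma sum_le_one_of_subsingleton_adj [DecidableEq V] (hloop : ∀ v, m v v = 0)
    (h2 : ∀ u v, m u v ≤ 2) (hcov : A' ∪ B' = Set.univ)
    (hA' : ∀ x ∈ A', {y | y ∈ B' ∧ (Triangulate m hsymm).Adj x y}.Subsingleton)
    (hB' : ∀ x ∈ B', {y | y ∈ A' ∧ (Triangulate m hsymm).Adj x y}.Subsingleton)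
    {a : V} (ha : Sum.inl a ∈ A') {B : Finset V} (hB : ∀ b ∈ B, Sum.inl b ∈ B') :
    ∑ b ∈ B, m a b ≤ 1 := by
  have hne {b : V} (hb : m a b ≠ 0) : a ≠ b := by rintro rfl; exact hb (hloop a)
  have single_le_one {b : V} (hb : b ∈ B) : m a b ≤ 1 := by
    by_contra! hab
    have hab2 : m a b = 2 := by have := h2 a b; omega
    set t : DoublePairs m := ⟨s(a, b), a, b, rfl, hab2⟩
    rcases (hcov ▸ Set.mem_univ (Sum.inr t) : Sum.inr t ∈ A' ∪ B') with ht | ht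
    · exact Sum.inl_ne_inr (hB' _ (hB b hb) ⟨ha, (hne (by omega)).symm, hsymm a b ▸ by omega⟩
        ⟨ht, Sym2.mem_mk_right a b⟩)
    · exact Sum.inl_ne_inr (hA' _ ha ⟨hB b hb, hne (by omega), by omega⟩
        ⟨ht, Sym2.mem_mk_left a b⟩)
  refine sum_le_one_iff.mpr fun b₁ b₂ hb₁ hb₂ h₁ h₂ => ⟨?_, ?_⟩
  · exact Sum.inl_injective
      (hA' _ ha ⟨hB b₁ hb₁, hne h₁, by omega⟩ ⟨hB b₂ hb₂, hne h₂, by omega⟩)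
  · have := single_le_one hb₁; omega

lemma IsMultigraph.exists_isMultigraphMatchingCut [Fintype V] [DecidableEq V]
    (hm : IsMultigraph m) (h2 : ∀ u v, m u v ≤ 2) (h : HasMatchingCut (Triangulate m hm.1)) :
    ∃ A B : Finset V, IsMultigraphMatchingCut m A B := by
  obtain ⟨A', B', hA'ne, hB'ne, hdisj, hcov, hA', hB'⟩ := h
  have hcov' : B' ∪ A' = Set.univ := Set.union_comm A' B' ▸ hcov
  classical
  refine ⟨({v | Sum.inl v ∈ A'} : Finset V), ({v | Sum.inl v ∈ B'} : Finset V),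
    ?_, ?_, ?_, ?_, ?_, ?_⟩
  · simpa [filter_nonempty_iff] using exists_inl_mem_of_subsingleton_adj hm.2 hA'ne hcov hA'
  · simpa [filter_nonempty_iff] using exists_inl_mem_of_subsingleton_adj hm.2 hB'ne hcov' hB'
  · exact disjoint_filter.mpr fun v _ hA hB => Set.disjoint_left.mp hdisj hA hB
  · ext v
    simpa using (hcov ▸ Set.mem_univ (Sum.inl v) : Sum.inl v ∈ A' ∪ B')
  · intro a ha
    exact sum_le_one_of_subsingleton_adj hm.2 h2 hcov hA' hB' (mem_filter.mp ha).2
      fun b hb => (mem_filter.mp hb).2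
  · intro b hb
    rw [sum_congr rfl fun a _ => hm.1 a b]
    exact sum_le_one_of_subsingleton_adj hm.2 h2 hcov' hB' hA' (mem_filter.mp hb).2
      fun a ha => (mem_filter.mp ha).2

end Backward

end Triangulation

/-- A multigraph with multiplicities in `{0, 1, 2}` has a multigraph matching
cut if and only if the simple graph obtained by replacing every double edge by
a triangle has a matching cut. -/
theorem stmt4 {V : Type*} [Fintype V] [DecidableEq V]
    (m : V → V → ℕ) (hm : IsMultigraph m) (h2 : ∀ u v, m u v ≤ 2) :
    (∃ A B : Finset V, IsMultigraphMatchingCut m A B) ↔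
      HasMatchingCut (Triangulate m hm.1) :=
  ⟨fun ⟨_, _, hcut⟩ => hcut.hasMatchingCut_triangulate hm.1,
    hm.exists_isMultigraphMatchingCut h2⟩
end

section
/- Let G be a connected partially reflexive graph on a finite vertex set V and let v be a vertex with exactly one neighbour u, i.e. N(v) = {u} with u ≠ v. Then G has a stable cut if and only if {u} is a stable cut of G, or G − {v} has a stable cut. -/
/-!
Take a stable cut `S` of `G` with sides `A` and `B`. If `v ∈ S`, or if `u, v ∉ S` (then `u` and `v`
lie on the same side, as `r v u`), deleting `v` keeps both sides nonempty, so `S ∖ {v}` is a stable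
cut of `G − v`. If `v ∉ S` but `u ∈ S`, then `u` is irreflexive and separates the pendant vertex `v`
from the rest of the graph, which is nonempty because `A` and `B` together contain a vertex other
than `u` and `v`. Conversely, a stable cut of `G − v` stays a stable cut of `G` once `v` is put on
the side of its only neighbour `u`.
-/

/-- `S` is an independent set of the partially reflexive graph given by the
symmetric relation `r` (loops allowed): no two vertices of `S` are related
(in particular every vertex of `S` is irreflexive). -/
def PRIndep {V : Type*} (r : V → V → Prop) (S : Set V) : Prop :=
  ∀ u ∈ S, ∀ v ∈ S, ¬ r u v

/-- `S` is a stable cut of the partially reflexive graph given by `r`: an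
independent set whose removal disconnects the graph, i.e. the complement of `S`
splits into two nonempty sets `A`, `B` with no edges between them. -/
def PRStableCut {V : Type*} (r : V → V → Prop) (S : Set V) : Prop :=
  PRIndep r S ∧ ∃ A B : Set V, A.Nonempty ∧ B.Nonempty ∧ Disjoint A B ∧
    A ∪ B = Sᶜ ∧ ∀ a ∈ A, ∀ b ∈ B, ¬ r a b

/-- The partially reflexive graph given by `r` has a stable cut. -/
def HasPRStableCut {V : Type*} (r : V → V → Prop) : Prop :=
  ∃ S : Set V, PRStableCut r S

section StableCut

variable {V : Type*} {r : V → V → Prop} {S A B : Set V}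

structure PRSeparates (r : V → V → Prop) (S A B : Set V) : Prop where
  left_nonempty : A.Nonempty
  right_nonempty : B.Nonempty
  disjoint : Disjoint A B
  union_eq : A ∪ B = Sᶜ
  not_rel : ∀ a ∈ A, ∀ b ∈ B, ¬ r a b

theorem prStableCut_iff : PRStableCut r S ↔ PRIndep r S ∧ ∃ A B, PRSeparates r S A B := by
  constructor
  · rintro ⟨hS, A, B, hA, hB, hd, hu, hr⟩
    exact ⟨hS, A, B, hA, hB, hd, hu, hr⟩
  · rintro ⟨hS, A, B, hA, hB, hd, hu, hr⟩
    exact ⟨hS, A, B, hA, hB, hd, hu, hr⟩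

namespace PRSeparates

theorem symm (hr : Symmetric r) (h : PRSeparates r S A B) : PRSeparates r S B A where
  left_nonempty := h.right_nonempty
  right_nonempty := h.left_nonempty
  disjoint := h.disjoint.symm
  union_eq := by rw [Set.union_comm, h.union_eq]
  not_rel b hb a ha hba := h.not_rel a ha b hb (hr hba)

theorem mem_or_mem_of_notMem (h : PRSeparates r S A B) {x : V} (hx : x ∉ S) : x ∈ A ∨ x ∈ B := by
  rw [← Set.mem_union, h.union_eq]
  exact hx

theorem notMem_of_mem_left (h : PRSeparates r S A B) {x : V} (hx : x ∈ A) : x ∉ S := by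
  rw [← Set.mem_compl_iff, ← h.union_eq]
  exact Or.inl hx

theorem notMem_of_mem_right (h : PRSeparates r S A B) {x : V} (hx : x ∈ B) : x ∉ S := by
  rw [← Set.mem_compl_iff, ← h.union_eq]
  exact Or.inr hx

theorem preimage_val {p : V → Prop} (h : PRSeparates r S A B) (hA : ∃ a ∈ A, p a)
    (hB : ∃ b ∈ B, p b) :
    PRSeparates (fun a b : Subtype p => r a b) (Subtype.val ⁻¹' S) (Subtype.val ⁻¹' A)
      (Subtype.val ⁻¹' B) where
  left_nonempty := let ⟨a, ha, hpa⟩ := hA; ⟨⟨a, hpa⟩, ha⟩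
  right_nonempty := let ⟨b, hb, hpb⟩ := hB; ⟨⟨b, hpb⟩, hb⟩
  disjoint := h.disjoint.preimage _
  union_eq := by rw [← Set.preimage_union, h.union_eq, Set.preimage_compl]
  not_rel a ha b hb := h.not_rel a ha b hb

theorem insert_image_val {v : V} {S' A' B' : Set {x : V // x ≠ v}}
    (h : PRSeparates (fun a b : {x : V // x ≠ v} => r a b) S' A' B')
    (hv : ∀ b ∈ B', ¬ r v b) :
    PRSeparates r (Subtype.val '' S') (insert v (Subtype.val '' A')) (Subtype.val '' B') where
  left_nonempty := ⟨v, Set.mem_insert v _⟩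
  right_nonempty := h.right_nonempty.image _
  disjoint := by
    rw [Set.disjoint_insert_left, Set.disjoint_image_iff Subtype.val_injective]
    exact ⟨fun ⟨b, _, hb⟩ => b.2 hb, h.disjoint⟩
  union_eq := by
    ext x
    by_cases hxv : x = v
    · subst hxv
      simp
    · have hx := congrArg (⟨x, hxv⟩ ∈ ·) h.union_eq
      simp only [Set.mem_union, Set.mem_compl_iff, eq_iff_iff] at hx
      simp [hxv, hx]
  not_rel := by
    rintro _ (rfl | ⟨a, ha, rfl⟩) _ ⟨b, hb, rfl⟩
    exacts [hv b hb, h.not_rel a ha b hb]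

end PRSeparates

theorem PRIndep.preimage_val {p : V → Prop} (hS : PRIndep r S) :
    PRIndep (fun a b : Subtype p => r a b) (Subtype.val ⁻¹' S) :=
  fun a ha b hb => hS a ha b hb

theorem PRIndep.image_val {p : V → Prop} {S' : Set (Subtype p)}
    (hS : PRIndep (fun a b : Subtype p => r a b) S') : PRIndep r (Subtype.val '' S') := by
  rintro _ ⟨a, ha, rfl⟩ _ ⟨b, hb, rfl⟩
  exact hS a ha b hb

theorem hasPRStableCut_subtype {p : V → Prop} (hS : PRIndep r S) (h : PRSeparates r S A B)
    (hA : ∃ a ∈ A, p a) (hB : ∃ b ∈ B, p b) :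
    HasPRStableCut (fun a b : Subtype p => r a b) :=
  ⟨_, prStableCut_iff.2 ⟨hS.preimage_val, _, _, h.preimage_val hA hB⟩⟩

theorem prStableCut_singleton_of_pendant {u v : V} (huu : ¬ r u u) (huv : u ≠ v)
    (hv : ∀ w, w ≠ v → r v w → w = u) (hw : ∃ w, w ≠ u ∧ w ≠ v) : PRStableCut r {u} := by
  obtain ⟨w, hwu, hwv⟩ := hw
  refine prStableCut_iff.2 ⟨?_, {v}, {u, v}ᶜ, ⟨v, rfl⟩, ⟨w, by simp [hwu, hwv]⟩, ?_, ?_, ?_⟩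
  · rintro _ rfl _ rfl
    exact huu
  · simp
  · ext x
    by_cases hxv : x = v <;> simp [hxv, huv.symm]
  · rintro _ rfl b hb hvb
    simp only [Set.mem_compl_iff, Set.mem_insert_iff, Set.mem_singleton_iff, not_or] at hb
    exact hb.1 (hv b hb.2 hvb)

theorem PRSeparates.exists_ne_ne (h : PRSeparates r S A B) {u : V} (huS : u ∈ S) (v : V) :
    ∃ w, w ≠ u ∧ w ≠ v := by
  obtain ⟨a, ha⟩ := h.left_nonempty
  obtain ⟨b, hb⟩ := h.right_nonempty
  have hau : a ≠ u := fun hau => h.notMem_of_mem_left ha (hau ▸ huS)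
  have hbu : b ≠ u := fun hbu => h.notMem_of_mem_right hb (hbu ▸ huS)
  have hab : a ≠ b := fun hab => Set.disjoint_left.1 h.disjoint ha (hab ▸ hb)
  by_cases hav : a = v
  · exact ⟨b, hbu, fun hbv => hab (hav.trans hbv.symm)⟩
  · exact ⟨a, hau, hav⟩

theorem PRStableCut.singleton_or_hasPRStableCut_subtype_ne (hsymm : Symmetric r) {u v : V}
    (huv : u ≠ v) (hadj : r v u) (hv : ∀ w, w ≠ v → r v w → w = u) (hS : PRStableCut r S) :
    PRStableCut r {u} ∨ HasPRStableCut (fun a b : {x : V // x ≠ v} => r a b) := by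
  obtain ⟨hS, A, B, h⟩ := prStableCut_iff.1 hS
  obtain ⟨a, ha⟩ := h.left_nonempty
  obtain ⟨b, hb⟩ := h.right_nonempty
  by_cases hvS : v ∈ S
  · exact Or.inr <| hasPRStableCut_subtype hS h
      ⟨a, ha, fun hav => h.notMem_of_mem_left ha (hav ▸ hvS)⟩
      ⟨b, hb, fun hbv => h.notMem_of_mem_right hb (hbv ▸ hvS)⟩
  by_cases huS : u ∈ S
  · exact Or.inl <| prStableCut_singleton_of_pendant (hS u huS u huS) huv hv (h.exists_ne_ne huS v)
  right
  wlog hvA : v ∈ A generalizing A B a b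
  · have hvB := (h.mem_or_mem_of_notMem hvS).resolve_left hvA
    exact this B A (h.symm hsymm) b hb a ha hvB
  have huA : u ∈ A :=
    (h.mem_or_mem_of_notMem huS).resolve_right fun huB => h.not_rel v hvA u huB hadj
  have hbv : b ≠ v := fun hbv => Set.disjoint_left.1 h.disjoint hvA (hbv ▸ hb)
  exact hasPRStableCut_subtype hS h ⟨u, huA, huv⟩ ⟨b, hb, hbv⟩

theorem HasPRStableCut.of_subtype_ne (hsymm : Symmetric r) {u v : V} (huv : u ≠ v)
    (hv : ∀ w, w ≠ v → r v w → w = u)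
    (hS' : HasPRStableCut (fun a b : {x : V // x ≠ v} => r a b)) : HasPRStableCut r := by
  obtain ⟨S', hS'⟩ := hS'
  obtain ⟨hS', A', B', h'⟩ := prStableCut_iff.1 hS'
  wlog huB : (⟨u, huv⟩ : {x : V // x ≠ v}) ∉ B' generalizing A' B'
  · exact this B' A' (h'.symm fun _ _ hab => hsymm hab)
      fun huA => Set.disjoint_left.1 h'.disjoint huA (not_not.1 huB)
  refine ⟨_, prStableCut_iff.2 ⟨hS'.image_val, _, _, h'.insert_image_val ?_⟩⟩
  intro b hb hvb
  obtain rfl : b = ⟨u, huv⟩ := Subtype.ext (hv b b.2 hvb)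
  exact huB hb

end StableCut

theorem stmt5_general {V : Type*} (r : V → V → Prop) (hsymm : Symmetric r)
    (v u : V) (huv : u ≠ v) (hadj : r v u)
    (hunique : ∀ w, w ≠ v → r w v → w = u) :
    HasPRStableCut r ↔
      PRStableCut r {u} ∨
        HasPRStableCut (fun a b : {x : V // x ≠ v} => r a.val b.val) := by
  have hv : ∀ w, w ≠ v → r v w → w = u := fun w hw h => hunique w hw (hsymm h)
  constructor
  · rintro ⟨S, hS⟩
    exact hS.singleton_or_hasPRStableCut_subtype_ne hsymm huv hadj hv
  · rintro (h | h)
    · exact ⟨{u}, h⟩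
    · exact h.of_subtype_ne hsymm huv hv

/-- Let `G` be a connected partially reflexive graph and let `v` be a vertex
whose only neighbour is `u ≠ v`. Then `G` has a stable cut iff `{u}` is a
stable cut of `G`, or `G − {v}` has a stable cut. -/
theorem stmt5 {V : Type*} [Fintype V] (r : V → V → Prop) (hsymm : Symmetric r)
    (hconn : (SimpleGraph.fromRel r).Connected)
    (v u : V) (huv : u ≠ v) (hadj : r v u)
    (hunique : ∀ w, w ≠ v → r w v → w = u) :
    HasPRStableCut r ↔
      PRStableCut r {u} ∨
        HasPRStableCut (fun a b : {x : V // x ≠ v} => r a.val b.val) :=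
  stmt5_general r hsymm v u huv hadj hunique
end

section
/- Let G be a connected partially reflexive graph on a finite vertex set V and let v be an irreflexive vertex with exactly two neighbours a ≠ b, i.e. N(v) = {a, b} and r(v,v) fails. Then G has a stable cut if and only if {v} is a stable cut of G, or {a, b} is a stable cut of G, or G − {v} has a stable cut. -/
structure PRSeparation {V : Type*} (r : V → V → Prop) (S A B : Set V) : Prop where
  left_nonempty : A.Nonempty
  right_nonempty : B.Nonempty
  disjoint : Disjoint A B
  union_eq : A ∪ B = Sᶜ
  not_rel : ∀ x ∈ A, ∀ y ∈ B, ¬ r x y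

open Set Function

section

variable {V W : Type*} {r : V → V → Prop} {S A B : Set V} {v : V}

theorem prStableCut_iff_exists_separation :
    PRStableCut r S ↔ PRIndep r S ∧ ∃ A B, PRSeparation r S A B :=
  ⟨fun ⟨hS, A, B, h₁, h₂, h₃, h₄, h₅⟩ => ⟨hS, A, B, ⟨h₁, h₂, h₃, h₄, h₅⟩⟩,
    fun ⟨hS, A, B, ⟨h₁, h₂, h₃, h₄, h₅⟩⟩ => ⟨hS, A, B, h₁, h₂, h₃, h₄, h₅⟩⟩

theorem PRIndep.mono {T : Set V} (hT : PRIndep r T) (hST : S ⊆ T) : PRIndep r S :=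
  fun x hx y hy => hT x (hST hx) y (hST hy)

theorem PRIndep.preimage (f : W → V) (hS : PRIndep r S) :
    PRIndep (fun x y => r (f x) (f y)) (f ⁻¹' S) :=
  fun x hx y hy => hS (f x) hx (f y) hy

theorem PRIndep.image {f : W → V} {S : Set W} (hS : PRIndep (fun x y => r (f x) (f y)) S) :
    PRIndep r (f '' S) := by
  rintro _ ⟨x, hx, rfl⟩ _ ⟨y, hy, rfl⟩
  exact hS x hx y hy

theorem PRIndep.insert (hsymm : Symmetric r) (hS : PRIndep r S) (hvv : ¬ r v v)
    (hvS : ∀ w ∈ S, ¬ r v w) : PRIndep r (insert v S) := by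
  rintro x (rfl | hx) y (rfl | hy)
  · exact hvv
  · exact hvS y hy
  · exact fun hxy => hvS x hx (hsymm hxy)
  · exact hS x hx y hy

namespace PRSeparation

theorem right_subset_compl (h : PRSeparation r S A B) : B ⊆ Sᶜ :=
  h.union_eq ▸ subset_union_right

theorem symm (hsymm : Symmetric r) (h : PRSeparation r S A B) : PRSeparation r S B A where
  left_nonempty := h.right_nonempty
  right_nonempty := h.left_nonempty
  disjoint := h.disjoint.symm
  union_eq := union_comm B A ▸ h.union_eq
  not_rel x hx y hy hxy := h.not_rel y hy x hx (hsymm hxy)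

theorem preimage (f : W → V) (h : PRSeparation r S A B) (hA : (f ⁻¹' A).Nonempty)
    (hB : (f ⁻¹' B).Nonempty) :
    PRSeparation (fun x y => r (f x) (f y)) (f ⁻¹' S) (f ⁻¹' A) (f ⁻¹' B) where
  left_nonempty := hA
  right_nonempty := hB
  disjoint := h.disjoint.preimage f
  union_eq := by rw [← preimage_union, h.union_eq, preimage_compl]
  not_rel x hx y hy := h.not_rel (f x) hx (f y) hy

theorem image {f : W → V} (hf : Injective f) {S A B : Set W}
    (h : PRSeparation (fun x y => r (f x) (f y)) S A B) :
    PRSeparation r (f '' S ∪ (range f)ᶜ) (f '' A) (f '' B) where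
  left_nonempty := h.left_nonempty.image f
  right_nonempty := h.right_nonempty.image f
  disjoint := (disjoint_image_iff hf).mpr h.disjoint
  union_eq := by
    rw [← image_union, h.union_eq, image_compl_eq_range_sdiff_image hf, compl_union, compl_compl,
      sdiff_eq, inter_comm]
  not_rel := by
    rintro _ ⟨x, hx, rfl⟩ _ ⟨y, hy, rfl⟩
    exact h.not_rel x hx y hy

theorem insert_left (h : PRSeparation r (insert v S) A B) (hvS : v ∉ S)
    (hvB : ∀ w ∈ B, ¬ r v w) : PRSeparation r S (insert v A) B where
  left_nonempty := insert_nonempty v A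
  right_nonempty := h.right_nonempty
  disjoint := disjoint_insert_left.mpr
    ⟨fun hv => h.right_subset_compl hv (mem_insert v S), h.disjoint⟩
  union_eq := by
    rw [insert_union, h.union_eq]
    ext x
    by_cases hx : x = v <;> simp [hx, hvS]
  not_rel := by
    rintro x (rfl | hx) y hy
    · exact hvB y hy
    · exact h.not_rel x hx y hy

theorem prStableCut_nbhd (h : PRSeparation r S A B) (hS : PRIndep r S) (hvv : ¬ r v v)
    (hA : A ⊆ {v}) : PRStableCut r {w | r v w} := by
  obtain rfl : A = {v} := h.left_nonempty.subset_singleton_iff.mp hA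
  have hvB : v ∉ B := disjoint_singleton_left.mp h.disjoint
  have hN : {w | r v w} ⊆ S := by
    intro w hw
    by_contra hwS
    rw [← mem_compl_iff, ← h.union_eq] at hwS
    rcases hwS with rfl | hwB
    · exact hvv hw
    · exact h.not_rel v rfl w hwB hw
  refine prStableCut_iff_exists_separation.mpr
    ⟨hS.mono hN, {v}, (insert v {w | r v w})ᶜ, singleton_nonempty v, ?_, ?_, ?_, ?_⟩
  · obtain ⟨y, hy⟩ := h.right_nonempty
    refine ⟨y, ?_⟩
    rintro (rfl | hvy)
    · exact hvB hy
    · exact h.not_rel v rfl y hy hvy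
  · simp
  · ext x
    simp only [mem_union, mem_singleton_iff, mem_compl_iff, mem_insert_iff, mem_ofPred_eq]
    constructor
    · rintro (rfl | hx) <;> tauto
    · tauto
  · rintro _ rfl y hy hvy
    exact hy (Or.inr hvy)

end PRSeparation

theorem hasPRStableCut_delete_of_separation (hS : PRIndep r S) (h : PRSeparation r S A B)
    (hA : (A \ {v}).Nonempty) (hB : (B \ {v}).Nonempty) :
    HasPRStableCut (fun x y : {w : V // w ≠ v} => r x.val y.val) := by
  obtain ⟨a, haA, hav⟩ := hA
  obtain ⟨b, hbB, hbv⟩ := hB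
  exact ⟨_, prStableCut_iff_exists_separation.mpr ⟨hS.preimage Subtype.val, _, _,
    h.preimage Subtype.val ⟨⟨a, hav⟩, haA⟩ ⟨⟨b, hbv⟩, hbB⟩⟩⟩

theorem PRStableCut.nbhd_or_hasPRStableCut_delete (hsymm : Symmetric r) (hvv : ¬ r v v)
    (hS : PRStableCut r S) :
    PRStableCut r {w | r v w} ∨ HasPRStableCut (fun x y : {w : V // w ≠ v} => r x.val y.val) := by
  obtain ⟨hS, A, B, h⟩ := prStableCut_iff_exists_separation.mp hS
  by_cases hA : (A \ {v}).Nonempty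
  · by_cases hB : (B \ {v}).Nonempty
    · exact Or.inr (hasPRStableCut_delete_of_separation hS h hA hB)
    · rw [not_nonempty_iff_eq_empty, sdiff_eq_empty] at hB
      exact Or.inl ((h.symm hsymm).prStableCut_nbhd hS hvv hB)
  · rw [not_nonempty_iff_eq_empty, sdiff_eq_empty] at hA
    exact Or.inl (h.prStableCut_nbhd hS hvv hA)

theorem hasPRStableCut_of_separation_insert {a b : V} (hsymm : Symmetric r) (hvv : ¬ r v v)
    (hnbr : ∀ w, r v w → w = a ∨ w = b) (hS : PRIndep r S) (hvS : v ∉ S)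
    (h : PRSeparation r (insert v S) A B) : HasPRStableCut r := by
  have hno_nbr {C : Set V} (ha : a ∉ C) (hb : b ∉ C) (w : V) (hw : w ∈ C) : ¬ r v w :=
    fun hvw => (hnbr w hvw).elim (fun h => ha (h ▸ hw)) (fun h => hb (h ▸ hw))
  by_cases hB : a ∉ B ∧ b ∉ B
  · exact ⟨S, prStableCut_iff_exists_separation.mpr
      ⟨hS, _, _, h.insert_left hvS (hno_nbr hB.1 hB.2)⟩⟩
  by_cases hA : a ∉ A ∧ b ∉ A
  · exact ⟨S, prStableCut_iff_exists_separation.mpr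
      ⟨hS, _, _, (h.symm hsymm).insert_left hvS (hno_nbr hA.1 hA.2)⟩⟩
  -- Now `a` and `b` lie on opposite sides, so neither is in `S`.
  have hab : a ∈ A ∪ B ∧ b ∈ A ∪ B := by
    have hdisj : ∀ x ∈ A, x ∉ B := fun _ hx => disjoint_left.mp h.disjoint hx
    have := hdisj a
    have := hdisj b
    simp only [mem_union]
    tauto
  have hNS : ∀ w ∈ S, ¬ r v w := by
    refine hno_nbr (fun haS => ?_) (fun hbS => ?_)
    · exact (h.union_eq ▸ hab.1) (mem_insert_of_mem v haS)
    · exact (h.union_eq ▸ hab.2) (mem_insert_of_mem v hbS)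
  exact ⟨insert v S, prStableCut_iff_exists_separation.mpr ⟨hS.insert hsymm hvv hNS, _, _, h⟩⟩

theorem hasPRStableCut_of_hasPRStableCut_delete {a b : V} (hsymm : Symmetric r) (hvv : ¬ r v v)
    (hnbr : ∀ w, r v w → w = a ∨ w = b)
    (h : HasPRStableCut (fun x y : {w : V // w ≠ v} => r x.val y.val)) : HasPRStableCut r := by
  obtain ⟨S, hS⟩ := h
  obtain ⟨hS, A, B, hAB⟩ := prStableCut_iff_exists_separation.mp hS
  have hAB' := hAB.image (f := Subtype.val) Subtype.val_injective
  have hrange : (range (Subtype.val : {w // w ≠ v} → V))ᶜ = {v} := by simp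
  rw [hrange, union_singleton] at hAB'
  exact hasPRStableCut_of_separation_insert hsymm hvv hnbr hS.image (by simp) hAB'

end

theorem stmt6_general {V : Type*} (r : V → V → Prop) (hsymm : Symmetric r)
    (v a b : V) (hloop : ¬ r v v)
    (hadja : r v a) (hadjb : r v b)
    (hunique : ∀ w, w ≠ v → r w v → w = a ∨ w = b) :
    HasPRStableCut r ↔
      PRStableCut r {v} ∨ PRStableCut r {a, b} ∨
        HasPRStableCut (fun x y : {w : V // w ≠ v} => r x.val y.val) := by
  have hnbr : ∀ w, r v w → w = a ∨ w = b := fun w hw =>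
    hunique w (by rintro rfl; exact hloop hw) (hsymm hw)
  have hN : {w | r v w} = {a, b} := by
    ext w
    exact ⟨hnbr w, by rintro (rfl | rfl) <;> assumption⟩
  constructor
  · rintro ⟨S, hS⟩
    rw [← hN]
    exact Or.inr (hS.nbhd_or_hasPRStableCut_delete hsymm hloop)
  · rintro (h | h | h)
    · exact ⟨_, h⟩
    · exact ⟨_, h⟩
    · exact hasPRStableCut_of_hasPRStableCut_delete hsymm hloop hnbr h

/-- Let `G` be a connected partially reflexive graph and let `v` be an
irreflexive vertex whose only neighbours are `a ≠ b`. Then `G` has a stable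
cut iff `{v}` is a stable cut of `G`, or `{a, b}` is a stable cut of `G`, or
`G − {v}` has a stable cut. -/
theorem stmt6 {V : Type*} [Fintype V] (r : V → V → Prop) (hsymm : Symmetric r)
    (hconn : (SimpleGraph.fromRel r).Connected)
    (v a b : V) (hloop : ¬ r v v) (hab : a ≠ b) (hav : a ≠ v) (hbv : b ≠ v)
    (hadja : r v a) (hadjb : r v b)
    (hunique : ∀ w, w ≠ v → r w v → w = a ∨ w = b) :
    HasPRStableCut r ↔
      PRStableCut r {v} ∨ PRStableCut r {a, b} ∨
        HasPRStableCut (fun x y : {w : V // w ≠ v} => r x.val y.val) :=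
  stmt6_general r hsymm v a b hloop hadja hadjb hunique
end

section
/- Let G be a connected partially reflexive graph on a finite vertex set V and let x ≠ y be true twins of degree at least 3, i.e. r(x,y) holds, |N(x)| ≥ 3, and for every vertex u ∉ {x, y} one has r(x,u) if and only if r(y,u). Let G' be the partially reflexive graph on V ∖ {y} obtained from G by deleting y and adding a loop at x (i.e. G' agrees with G on V ∖ {y} except that r'(x,x) holds). Then G has a stable cut if and only if G' has a stable cut. -/
/-!
Since `x` and `y` are adjacent, no stable cut contains both, and if neither lies in the cut they
lie on the same side. If `x` lies in the cut and `y` on one side, the twin property lets `x` move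
to `y`'s side. So `G` always has a stable cut with `x` on one side, and deleting `y` from it gives
a stable cut of `G'`, where `x` is looped and hence never in a cut. Conversely `y` can be added
to the side of `x` in any stable cut of `G'`.
-/

section

variable {V : Type*}

def reduceTwin (r : V → V → Prop) (x y : V) : {w : V // w ≠ y} → {w : V // w ≠ y} → Prop :=
  fun a b => r a.val b.val ∨ (a.val = x ∧ b.val = x)

theorem reduceTwin_symmetric {r : V → V → Prop} (hr : Symmetric r) (x y : V) :
    Symmetric (reduceTwin r x y) := by
  rintro a b (h | ⟨ha, hb⟩)
  · exact Or.inl (hr h)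
  · exact Or.inr ⟨hb, ha⟩

structure IsStableCutWith (r : V → V → Prop) (S A B : Set V) : Prop where
  indep : PRIndep r S
  left_nonempty : A.Nonempty
  right_nonempty : B.Nonempty
  disjoint : Disjoint A B
  union_eq : A ∪ B = Sᶜ
  not_rel : ∀ a ∈ A, ∀ b ∈ B, ¬ r a b

theorem hasPRStableCut_iff {r : V → V → Prop} :
    HasPRStableCut r ↔ ∃ S A B, IsStableCutWith r S A B := by
  constructor
  · rintro ⟨S, hS, A, B, hA, hB, hAB, hU, hr⟩
    exact ⟨S, A, B, hS, hA, hB, hAB, hU, hr⟩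
  · rintro ⟨S, A, B, hS, hA, hB, hAB, hU, hr⟩
    exact ⟨S, hS, A, B, hA, hB, hAB, hU, hr⟩

namespace IsStableCutWith

variable {r : V → V → Prop} {S A B : Set V}

theorem symm (hr : Symmetric r) (h : IsStableCutWith r S A B) : IsStableCutWith r S B A where
  indep := h.indep
  left_nonempty := h.right_nonempty
  right_nonempty := h.left_nonempty
  disjoint := h.disjoint.symm
  union_eq := by rw [Set.union_comm, h.union_eq]
  not_rel b hb a ha hba := h.not_rel a ha b hb (hr hba)

theorem mem_or_mem (h : IsStableCutWith r S A B) {v : V} (hv : v ∉ S) : v ∈ A ∨ v ∈ B := by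
  rw [← Set.mem_union, h.union_eq]
  exact hv

theorem notMem_of_mem_left (h : IsStableCutWith r S A B) {v : V} (hv : v ∈ A) : v ∉ S := by
  rw [← Set.mem_compl_iff, ← h.union_eq]
  exact Or.inl hv

theorem notMem_of_mem_right (h : IsStableCutWith r S A B) {v : V} (hv : v ∈ B) : v ∉ S :=
by
  rw [← Set.mem_compl_iff, ← h.union_eq]
  exact Or.inr hv

theorem exists_mem_left (hr : Symmetric r) (h : IsStableCutWith r S A B) {v : V} (hv : v ∉ S) :
    ∃ A B, IsStableCutWith r S A B ∧ v ∈ A := by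
  rcases h.mem_or_mem hv with hA | hB
  · exact ⟨A, B, h, hA⟩
  · exact ⟨B, A, h.symm hr, hB⟩

theorem move_twin {x y : V} (htwin : ∀ u, u ≠ x → u ≠ y → (r x u ↔ r y u))
    (h : IsStableCutWith r S A B) (hxS : x ∈ S) (hyA : y ∈ A) :
    IsStableCutWith r (S \ {x}) (insert x A) B where
  indep u hu v hv := h.indep u hu.1 v hv.1
  left_nonempty := Set.insert_nonempty x A
  right_nonempty := h.right_nonempty
  disjoint :=
    Set.disjoint_insert_left.mpr ⟨fun hxB => h.notMem_of_mem_right hxB hxS, h.disjoint⟩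
  union_eq := by
    rw [Set.insert_union, h.union_eq, Set.sdiff_eq, Set.compl_inter, compl_compl,
      Set.union_comm, Set.insert_eq]
  not_rel := by
    rintro a (rfl | ha) b hb hab
    · have hbx : b ≠ a := fun hb' => h.notMem_of_mem_right hb (hb' ▸ hxS)
      have hby : b ≠ y := fun hb' => Set.disjoint_left.mp h.disjoint hyA (hb' ▸ hb)
      exact h.not_rel y hyA b hb ((htwin b hbx hby).mp hab)
    · exact h.not_rel a ha b hb hab

theorem preimage_reduceTwin {x y : V} (hxy : x ≠ y) (hadj : r x y)
    (h : IsStableCutWith r S A B) (hxA : x ∈ A) :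
    IsStableCutWith (reduceTwin r x y) (Subtype.val ⁻¹' S) (Subtype.val ⁻¹' A)
      (Subtype.val ⁻¹' B) where
  indep := by
    rintro u hu v hv (huv | ⟨hux, -⟩)
    · exact h.indep u hu v hv huv
    · exact h.notMem_of_mem_left hxA (hux ▸ hu)
  left_nonempty := ⟨⟨x, hxy⟩, hxA⟩
  right_nonempty := by
    obtain ⟨b, hb⟩ := h.right_nonempty
    exact ⟨⟨b, fun hby => h.not_rel x hxA b hb (hby ▸ hadj)⟩, hb⟩
  disjoint := h.disjoint.preimage _
  union_eq := by rw [← Set.preimage_union, h.union_eq, Set.preimage_compl]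
  not_rel := by
    rintro a ha b hb (hab | ⟨hax, hbx⟩)
    · exact h.not_rel a ha b hb hab
    · exact Set.disjoint_left.mp h.disjoint (show x ∈ A from hax ▸ ha) (show x ∈ B from hbx ▸ hb)

theorem image_reduceTwin {x y : V} (hxy : x ≠ y)
    (htwin : ∀ u, u ≠ x → u ≠ y → (r x u ↔ r y u))
    {S A B : Set {w : V // w ≠ y}} (h : IsStableCutWith (reduceTwin r x y) S A B)
    (hxA : ⟨x, hxy⟩ ∈ A) :
    IsStableCutWith r (Subtype.val '' S) (insert y (Subtype.val '' A)) (Subtype.val '' B) where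
  indep := by
    rintro _ ⟨u, hu, rfl⟩ _ ⟨v, hv, rfl⟩ huv
    exact h.indep u hu v hv (Or.inl huv)
  left_nonempty := Set.insert_nonempty _ _
  right_nonempty := h.right_nonempty.image _
  disjoint := Set.disjoint_insert_left.mpr
    ⟨fun ⟨b, _, hb⟩ => b.prop hb, (Set.disjoint_image_iff Subtype.val_injective).mpr h.disjoint⟩
  union_eq := by
    rw [Set.insert_union, ← Set.image_union, h.union_eq]
    ext v
    by_cases hv : v = y <;> simp [hv]
  not_rel := by
    rintro a (hay | ⟨a, ha, rfl⟩) _ ⟨b, hb, rfl⟩ hab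
    · have hbx : b.val ≠ x := by
        rintro hbx
        obtain rfl : b = ⟨x, hxy⟩ := Subtype.ext hbx
        exact Set.disjoint_left.mp h.disjoint hxA hb
      rw [Set.mem_singleton_iff.mp hay] at hab
      exact h.not_rel _ hxA b hb (Or.inl ((htwin b hbx b.prop).mpr hab))
    · exact h.not_rel a ha b hb (Or.inl hab)

end IsStableCutWith

theorem exists_isStableCutWith_mem_left {r : V → V → Prop} (hr : Symmetric r) {x y : V}
    (hadj : r x y) (htwin : ∀ u, u ≠ x → u ≠ y → (r x u ↔ r y u)) {S A B : Set V}
    (h : IsStableCutWith r S A B) : ∃ S A B, IsStableCutWith r S A B ∧ x ∈ A := by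
  by_cases hxS : x ∈ S
  · have hyS : y ∉ S := fun hyS => h.indep x hxS y hyS hadj
    obtain ⟨A, B, h, hyA⟩ := h.exists_mem_left hr hyS
    exact ⟨_, _, _, h.move_twin htwin hxS hyA, Set.mem_insert x A⟩
  · obtain ⟨A, B, h, hxA⟩ := h.exists_mem_left hr hxS
    exact ⟨S, A, B, h, hxA⟩

end

theorem stmt8_general {V : Type*} (r : V → V → Prop) (hsymm : Symmetric r)
    (x y : V) (hxy : x ≠ y) (hadj : r x y)
    (htwin : ∀ u, u ≠ x → u ≠ y → (r x u ↔ r y u)) :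
    HasPRStableCut r ↔
      HasPRStableCut (fun a b : {w : V // w ≠ y} =>
        r a.val b.val ∨ (a.val = x ∧ b.val = x)) := by
  change HasPRStableCut r ↔ HasPRStableCut (reduceTwin r x y)
  rw [hasPRStableCut_iff, hasPRStableCut_iff]
  constructor
  · rintro ⟨S, A, B, h⟩
    obtain ⟨S, A, B, h, hxA⟩ := exists_isStableCutWith_mem_left hsymm hadj htwin h
    exact ⟨_, _, _, h.preimage_reduceTwin hxy hadj hxA⟩
  · rintro ⟨S, A, B, h⟩
    have hxS : ⟨x, hxy⟩ ∉ S := fun hxS => h.indep _ hxS _ hxS (Or.inr ⟨rfl, rfl⟩)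
    obtain ⟨A, B, h, hxA⟩ := h.exists_mem_left (reduceTwin_symmetric hsymm x y) hxS
    exact ⟨_, _, _, h.image_reduceTwin hxy htwin hxA⟩

/-- Let `G` be a connected partially reflexive graph and let `x ≠ y` be true
twins of degree at least `3`. Let `G'` be obtained from `G` by deleting `y`
and adding a loop at `x`. Then `G` has a stable cut iff `G'` has one. -/
theorem stmt8 {V : Type*} [Fintype V] (r : V → V → Prop) (hsymm : Symmetric r)
    (hconn : (SimpleGraph.fromRel r).Connected)
    (x y : V) (hxy : x ≠ y) (hadj : r x y)
    (hdeg : 3 ≤ Set.ncard {u | u ≠ x ∧ r u x})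
    (htwin : ∀ u, u ≠ x → u ≠ y → (r x u ↔ r y u)) :
    HasPRStableCut r ↔
      HasPRStableCut (fun a b : {w : V // w ≠ y} =>
        r a.val b.val ∨ (a.val = x ∧ b.val = x)) :=
  stmt8_general r hsymm x y hxy hadj htwin
end

section
/- Let G be a finite simple graph that is H1-subgraph-free, and let u and v be adjacent vertices of G each having degree at least 3. Then u and v have a common neighbour; in particular, u and v lie in a triangle of G. -/
/-- The graph `H1`: vertices `c1 = 0`, `c2 = 1`, `p1 = 2`, `p2 = 3`,
`p3 = 4`, `p4 = 5`, with edges `c1c2`, `c1p1`, `c1p2`, `c2p3`, `c2p4`. -/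
def H1 : SimpleGraph (Fin 6) :=
  SimpleGraph.fromRel (fun a b =>
    (a = 0 ∧ b = 1) ∨ (a = 0 ∧ b = 2) ∨ (a = 0 ∧ b = 3) ∨
    (a = 1 ∧ b = 4) ∨ (a = 1 ∧ b = 5))

/-- `G` contains `H` as a subgraph: there is an injective map from the vertices
of `H` to those of `G` sending edges of `H` to edges of `G`. -/
def ContainsSubgraph {V W : Type*} (G : SimpleGraph V) (H : SimpleGraph W) : Prop :=
  ∃ f : W → V, Function.Injective f ∧ ∀ a b : W, H.Adj a b → G.Adj (f a) (f b)

/-! If the edge `uv` lies in no triangle, then two further neighbours `p₁, p₂` of `u` and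
`p₃, p₄` of `v` cannot coincide across the edge, so `u, v, p₁, p₂, p₃, p₄` span a copy of `H1`. -/

theorem Set.exists_pair_ne_of_two_lt_ncard {α : Type*} {s : Set α} (hs : 2 < s.ncard) (a : α) :
    ∃ b ∈ s, ∃ c ∈ s, b ≠ c ∧ b ≠ a ∧ c ≠ a := by
  have hlt : 1 < (s \ {a}).ncard := by
    have := Set.pred_ncard_le_ncard_sdiff_singleton s a
    omega
  obtain ⟨b, ⟨hb, hba⟩, c, ⟨hc, hca⟩, hbc⟩ :=
    (Set.one_lt_ncard (Set.finite_of_ncard_pos (by omega))).1 hlt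
  exact ⟨b, hb, c, hc, hbc, hba, hca⟩

namespace SimpleGraph

variable {V : Type*} {G : SimpleGraph V}

theorem containsSubgraph_H1_of_no_common_neighbor {u v p₁ p₂ p₃ p₄ : V} (huv : G.Adj u v)
    (hdisj : ∀ w, G.Adj u w → ¬ G.Adj v w)
    (h₁ : G.Adj u p₁) (h₂ : G.Adj u p₂) (h₃ : G.Adj v p₃) (h₄ : G.Adj v p₄)
    (h₁₂ : p₁ ≠ p₂) (h₃₄ : p₃ ≠ p₄) (h₁v : p₁ ≠ v) (h₂v : p₂ ≠ v) (h₃u : p₃ ≠ u) (h₄u : p₄ ≠ u) :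
    ContainsSubgraph G H1 := by
  have h₁₃ : p₁ ≠ p₃ := fun h => hdisj p₁ h₁ (h ▸ h₃)
  have h₁₄ : p₁ ≠ p₄ := fun h => hdisj p₁ h₁ (h ▸ h₄)
  have h₂₃ : p₂ ≠ p₃ := fun h => hdisj p₂ h₂ (h ▸ h₃)
  have h₂₄ : p₂ ≠ p₄ := fun h => hdisj p₂ h₂ (h ▸ h₄)
  refine ⟨![u, v, p₁, p₂, p₃, p₄], ?_, ?_⟩
  · simp only [Function.Injective, Fin.forall_fin_succ, Matrix.cons_val_zero, Matrix.cons_val_succ,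
      IsEmpty.forall_iff, Fin.succ_ne_zero]
    grind [huv.ne, h₁.ne, h₂.ne, h₃.ne, h₄.ne]
  · intro a b hab
    simp only [H1, fromRel_adj] at hab
    rcases hab with ⟨-, hab | hab⟩ <;>
      rcases hab with ⟨rfl, rfl⟩ | ⟨rfl, rfl⟩ | ⟨rfl, rfl⟩ | ⟨rfl, rfl⟩ | ⟨rfl, rfl⟩
    all_goals simp only [Matrix.cons_val]; first | assumption | exact G.adj_symm ‹_›

end SimpleGraph

theorem stmt9_general {V : Type*} (G : SimpleGraph V)
    (hfree : ¬ ContainsSubgraph G H1) (u v : V) (huv : G.Adj u v)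
    (hu : 3 ≤ (G.neighborSet u).ncard) (hv : 3 ≤ (G.neighborSet v).ncard) :
    ∃ w : V, G.Adj u w ∧ G.Adj v w := by
  by_contra! hdisj
  obtain ⟨p₁, h₁, p₂, h₂, h₁₂, h₁v, h₂v⟩ := Set.exists_pair_ne_of_two_lt_ncard hu v
  obtain ⟨p₃, h₃, p₄, h₄, h₃₄, h₃u, h₄u⟩ := Set.exists_pair_ne_of_two_lt_ncard hv u
  exact hfree <| G.containsSubgraph_H1_of_no_common_neighbor huv hdisj h₁ h₂ h₃ h₄ h₁₂ h₃₄
    h₁v h₂v h₃u h₄u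

/-- In an `H1`-subgraph-free graph, any two adjacent vertices of degree at
least `3` have a common neighbour (hence lie in a triangle). -/
theorem stmt9 {V : Type*} [Fintype V] (G : SimpleGraph V)
    (hfree : ¬ ContainsSubgraph G H1) (u v : V) (huv : G.Adj u v)
    (hu : 3 ≤ (G.neighborSet u).ncard) (hv : 3 ≤ (G.neighborSet v).ncard) :
    ∃ w : V, G.Adj u w ∧ G.Adj v w :=
  stmt9_general G hfree u v huv hu hv
end

section
/- Let G be a finite simple graph that is H1-subgraph-free and let x, y, z, w be four distinct pairwise adjacent vertices of G (a K4 subgraph). Then at most one vertex of G outside {x, y, z, w} has a neighbour in {x, y, z, w}. -/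
/-! Let `u ≠ v` lie outside a clique `s` with at least four vertices, `u` adjacent to `a ∈ s` and
`v` to `b ∈ s`. If `a = b`, take three further clique vertices `c, d, e`: the edge `ac` with
pendants `u, v` at `a` and `d, e` at `c` is a copy of `H1`. If `a ≠ b`, take two further clique
vertices `c, d`: the edge `ab` with pendants `u, c` at `a` and `v, d` at `b` is one. -/

open Finset

section

variable {V : Type*} {G : SimpleGraph V}

lemma containsSubgraph_H1_of_adj {c₁ c₂ p₁ p₂ p₃ p₄ : V}
    (hnodup : [c₁, c₂, p₁, p₂, p₃, p₄].Nodup) (hc : G.Adj c₁ c₂)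
    (h₁ : G.Adj c₁ p₁) (h₂ : G.Adj c₁ p₂) (h₃ : G.Adj c₂ p₃) (h₄ : G.Adj c₂ p₄) :
    ContainsSubgraph G H1 := by
  refine ⟨![c₁, c₂, p₁, p₂, p₃, p₄], ?_, ?_⟩
  · rw [← List.nodup_ofFn]
    simpa [List.ofFn_succ] using hnodup
  · have hrel : ∀ a b : Fin 6, ((a = 0 ∧ b = 1) ∨ (a = 0 ∧ b = 2) ∨ (a = 0 ∧ b = 3) ∨
        (a = 1 ∧ b = 4) ∨ (a = 1 ∧ b = 5)) →
        G.Adj (![c₁, c₂, p₁, p₂, p₃, p₄] a) (![c₁, c₂, p₁, p₂, p₃, p₄] b) := by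
      rintro a b (⟨rfl, rfl⟩ | ⟨rfl, rfl⟩ | ⟨rfl, rfl⟩ | ⟨rfl, rfl⟩ | ⟨rfl, rfl⟩) <;>
        assumption
    rintro a b ⟨-, hab | hba⟩
    · exact hrel a b hab
    · exact (hrel b a hba).symm

lemma containsSubgraph_H1_of_isClique [DecidableEq V] {s : Finset V}
    (hs : G.IsClique (s : Set V)) (hcard : 4 ≤ #s) {u v a b : V}
    (hu : u ∉ s) (hv : v ∉ s) (huv : u ≠ v) (ha : a ∈ s) (hb : b ∈ s) (hua : G.Adj u a) (hvb : G.Adj v b) :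
    ContainsSubgraph G H1 := by
  by_cases hab : a = b
  · subst hab
    obtain ⟨c, hc, d, hd, e, he, hcd, hce, hde⟩ := two_lt_card.1 (by
      rw [card_erase_of_mem ha]; omega : 2 < #(s.erase a))
    rw [mem_erase] at hc hd he
    refine containsSubgraph_H1_of_adj ?_ (hs ha hc.2 (Ne.symm hc.1)) hua.symm hvb.symm
      (hs hc.2 hd.2 hcd) (hs hc.2 he.2 hce)
    grind [List.nodup_cons]
  · obtain ⟨c, hc, d, hd, hcd⟩ := one_lt_card.1 (by
      rw [card_erase_of_mem (mem_erase.2 ⟨Ne.symm hab, hb⟩), card_erase_of_mem ha]; omega :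
        1 < #((s.erase a).erase b))
    simp only [mem_erase] at hc hd
    refine containsSubgraph_H1_of_adj ?_ (hs ha hb hab) hua.symm
      (hs ha hc.2.2 (Ne.symm hc.2.1)) hvb.symm (hs hb hd.2.2 (Ne.symm hd.1))
    grind [List.nodup_cons]

end

theorem stmt10_general {V : Type*} (G : SimpleGraph V)
    (hfree : ¬ ContainsSubgraph G H1) (x y z w : V)
    (hxy : G.Adj x y) (hxz : G.Adj x z) (hxw : G.Adj x w)
    (hyz : G.Adj y z) (hyw : G.Adj y w) (hzw : G.Adj z w) :
    {v | v ∉ ({x, y, z, w} : Set V) ∧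
        ∃ t ∈ ({x, y, z, w} : Set V), G.Adj v t}.Subsingleton := by
  classical
  have hK4 : G.IsNClique 4 ({x, y, z, w} : Finset V) :=
    (SimpleGraph.is3Clique_triple_iff.2 ⟨hyz, hyw, hzw⟩).insert (by simp [hxy, hxz, hxw])
  rw [show ({x, y, z, w} : Set V) = ↑({x, y, z, w} : Finset V) by push_cast; rfl]
  rintro u ⟨hu, a, ha, hua⟩ v ⟨hv, b, hb, hvb⟩
  by_contra huv
  exact hfree <| containsSubgraph_H1_of_isClique hK4.isClique hK4.card_eq.ge hu hv huv ha hb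
    hua hvb

/-- In an `H1`-subgraph-free graph, if `x, y, z, w` are four pairwise adjacent
vertices (a `K4`), then at most one vertex outside `{x, y, z, w}` has a
neighbour in `{x, y, z, w}`. -/
theorem stmt10 {V : Type*} [Fintype V] (G : SimpleGraph V)
    (hfree : ¬ ContainsSubgraph G H1) (x y z w : V)
    (hxy : G.Adj x y) (hxz : G.Adj x z) (hxw : G.Adj x w)
    (hyz : G.Adj y z) (hyw : G.Adj y w) (hzw : G.Adj z w) :
    {v | v ∉ ({x, y, z, w} : Set V) ∧
        ∃ t ∈ ({x, y, z, w} : Set V), G.Adj v t}.Subsingleton :=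
  stmt10_general G hfree x y z w hxy hxz hxw hyz hyw hzw
end

section
/- Let G be a finite simple graph that is H1-subgraph-free and let x, y, v, u, w be five distinct vertices such that {x, y, v} and {u, v, w} both induce triangles of G (two triangles sharing exactly the vertex v). Then no vertex among x, y, u, w has a neighbour outside {x, y, v, u, w}. -/
/-! Both endpoints of the edge `xv` already have further neighbours in the configuration
(`y` for `x`; `u` and `w` for `v`), so a neighbour of `x` outside it would complete a copy of
`H1` whose central edge is `xv`. The configuration is symmetric under swapping `x, y`, swapping
`u, w`, and exchanging the two triangles, which carries `x` to each of `y`, `u`, `w`. -/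

theorem containsSubgraph_H1_of_adj_s13 {V : Type*} {G : SimpleGraph V} {c₁ c₂ p₁ p₂ p₃ p₄ : V}
    (hdist : List.Pairwise (· ≠ ·) [c₁, c₂, p₁, p₂, p₃, p₄]) (h₁₂ : G.Adj c₁ c₂)
    (h₁p₁ : G.Adj c₁ p₁) (h₁p₂ : G.Adj c₁ p₂) (h₂p₃ : G.Adj c₂ p₃) (h₂p₄ : G.Adj c₂ p₄) :
    ContainsSubgraph G H1 := by
  refine ⟨![c₁, c₂, p₁, p₂, p₃, p₄], List.nodup_ofFn.mp hdist, fun i j hij => ?_⟩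
  fin_cases i <;> fin_cases j <;> simp [H1] at hij ⊢ <;> simp [G.adj_comm, *]

theorem eq_or_eq_or_eq_or_eq_of_adj_of_not_containsSubgraph_H1 {V : Type*} {G : SimpleGraph V}
    (hfree : ¬ ContainsSubgraph G H1) {x y v u w s : V}
    (hdist : List.Pairwise (· ≠ ·) [x, y, v, u, w])
    (hxy : G.Adj x y) (hxv : G.Adj x v) (huv : G.Adj u v) (hvw : G.Adj v w) (hxs : G.Adj x s) :
    s = y ∨ s = v ∨ s = u ∨ s = w := by
  by_contra! hs
  have hsx := hxs.ne
  refine hfree (containsSubgraph_H1_of_adj_s13 (c₁ := x) (c₂ := v) (p₁ := y) (p₂ := s)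
    ?_ hxv hxy hxs huv.symm hvw)
  simp only [List.pairwise_cons, List.mem_cons, List.not_mem_nil] at hdist ⊢
  grind

theorem stmt13_general {V : Type*} (G : SimpleGraph V)
    (hfree : ¬ ContainsSubgraph G H1) (x y v u w : V)
    (hdist : List.Pairwise (· ≠ ·) [x, y, v, u, w])
    (hxy : G.Adj x y) (hxv : G.Adj x v) (hyv : G.Adj y v)
    (huv : G.Adj u v) (huw : G.Adj u w) (hvw : G.Adj v w) :
    ∀ t ∈ ({x, y, u, w} : Set V), ∀ s : V, G.Adj t s →
      s ∈ ({x, y, v, u, w} : Set V) := by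
  have hswap : List.Pairwise (· ≠ ·) [y, x, v, u, w] := hdist.perm (.swap _ _ _) Ne.symm
  have hflip : List.Pairwise (· ≠ ·) [u, w, v, x, y] := hdist.perm
    (List.perm_append_comm (l₁ := [x, y]) (l₂ := [v, u, w]) |>.trans
      (List.perm_append_comm (l₁ := [v]) (l₂ := [u, w]) |>.append_right _)) Ne.symm
  have hflipswap : List.Pairwise (· ≠ ·) [w, u, v, x, y] := hflip.perm (.swap _ _ _) Ne.symm
  intro t ht s hts
  simp only [Set.mem_insert_iff, Set.mem_singleton_iff] at ht ⊢
  rcases ht with rfl | rfl | rfl | rfl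
  · have := eq_or_eq_or_eq_or_eq_of_adj_of_not_containsSubgraph_H1 hfree hdist hxy hxv huv hvw hts
    tauto
  · have := eq_or_eq_or_eq_or_eq_of_adj_of_not_containsSubgraph_H1 hfree hswap hxy.symm hyv huv hvw hts
    tauto
  · have := eq_or_eq_or_eq_or_eq_of_adj_of_not_containsSubgraph_H1 hfree hflip huw huv hxv
      hyv.symm hts
    tauto
  · have := eq_or_eq_or_eq_or_eq_of_adj_of_not_containsSubgraph_H1 hfree hflipswap huw.symm hvw.symm
      hxv hyv.symm hts
    tauto

/-- In an `H1`-subgraph-free graph, if `{x, y, v}` and `{u, v, w}` are two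
triangles on five distinct vertices (sharing exactly the vertex `v`), then no
vertex among `x, y, u, w` has a neighbour outside `{x, y, v, u, w}`. -/
theorem stmt13 {V : Type*} [Fintype V] (G : SimpleGraph V)
    (hfree : ¬ ContainsSubgraph G H1) (x y v u w : V)
    (hdist : List.Pairwise (· ≠ ·) [x, y, v, u, w])
    (hxy : G.Adj x y) (hxv : G.Adj x v) (hyv : G.Adj y v)
    (huv : G.Adj u v) (huw : G.Adj u w) (hvw : G.Adj v w) :
    ∀ t ∈ ({x, y, u, w} : Set V), ∀ s : V, G.Adj t s →
      s ∈ ({x, y, v, u, w} : Set V) :=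
  stmt13_general G hfree x y v u w hdist hxy hxv hyv huv huw hvw
end

section
/- Let G be a multigraph given by a finite vertex type V, a finite edge type E, and an endpoint map ε, and let L(G) be its line graph. (i) If L(G) has a stable cut, then G has a multigraph matching cut. (ii) If G has a multigraph matching cut and every vertex of G is incident to at least 2 edges of E, then L(G) has a stable cut. -/
/-- `(A, B)` is a multigraph matching cut of the multigraph with vertex type
`V`, edge type `E` and endpoint map `ε`: a partition of `V` into two nonempty
sets such that every vertex is incident to at most one edge whose other
endpoint lies on the opposite side of the partition. -/
def MGMatchingCut {V E : Type*} (ε : E → Sym2 V) (A B : Set V) : Prop :=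
  A.Nonempty ∧ B.Nonempty ∧ Disjoint A B ∧ A ∪ B = Set.univ ∧
    (∀ v ∈ A, {e : E | ∃ u ∈ B, ε e = s(v, u)}.Subsingleton) ∧
    (∀ v ∈ B, {e : E | ∃ u ∈ A, ε e = s(v, u)}.Subsingleton)

/-- The multigraph with endpoint map `ε` has a multigraph matching cut. -/
def HasMGMatchingCut {V E : Type*} (ε : E → Sym2 V) : Prop :=
  ∃ A B : Set V, MGMatchingCut ε A B

/-- The line graph of the multigraph with endpoint map `ε`: the simple graph on
the edge type `E` in which two distinct edges are adjacent iff they share an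
endpoint. -/
def MGLineGraph {V E : Type*} (ε : E → Sym2 V) : SimpleGraph E :=
  SimpleGraph.fromRel (fun e f => ∃ v : V, v ∈ ε e ∧ v ∈ ε f)

/-- A stable cut of a simple graph `H`: an independent set `S` such that the
complement of `S` splits into two nonempty sets with no edges between them. -/
def SimpleHasStableCut {W : Type*} (H : SimpleGraph W) : Prop :=
  ∃ S : Set W, (∀ u ∈ S, ∀ v ∈ S, ¬ H.Adj u v) ∧
    ∃ A B : Set W, A.Nonempty ∧ B.Nonempty ∧ Disjoint A B ∧ A ∪ B = Sᶜ ∧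
      ∀ a ∈ A, ∀ b ∈ B, ¬ H.Adj a b

/-!
(i) Given a stable cut `S` of `L(G)` with sides `A` and `B`, put on one side the vertices
covered by edges of `B`. An edge joining the two sides lies neither in `B` nor, as it meets
an edge of `B`, in `A`; so it lies in the independent set `S`, and no vertex meets two of them.

(ii) Given a matching cut `(A, B)`, the crossing edges form an independent set of `L(G)`, since
at each vertex there is at most one. The remaining edges lie inside `A` or inside `B`, and these
two classes are nonempty because a vertex of degree at least two has a non-crossing edge.
-/

section

variable {V E : Type*} {ε : E → Sym2 V}

lemma mgLineGraph_adj_iff {e f : E} :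
    (MGLineGraph ε).Adj e f ↔ e ≠ f ∧ ∃ v, v ∈ ε e ∧ v ∈ ε f := by
  rw [MGLineGraph, SimpleGraph.fromRel_adj]
  exact and_congr_right fun _ => or_iff_left_of_imp fun ⟨v, hf, he⟩ => ⟨v, he, hf⟩

lemma subsingleton_incident_of_independent {S : Set E}
    (hS : ∀ e ∈ S, ∀ f ∈ S, ¬ (MGLineGraph ε).Adj e f) (v : V) :
    {e | e ∈ S ∧ v ∈ ε e}.Subsingleton := by
  rintro e ⟨he, hve⟩ f ⟨hf, hvf⟩
  by_contra hne
  exact hS e he f hf (mgLineGraph_adj_iff.2 ⟨hne, v, hve, hvf⟩)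

section StableCut

def coveredVertices (ε : E → Sym2 V) (B : Set E) : Set V := {v | ∃ f ∈ B, v ∈ ε f}

variable {S A B : Set E} (hAB : Disjoint A B)
  (hnoadj : ∀ a ∈ A, ∀ b ∈ B, ¬ (MGLineGraph ε).Adj a b)
include hAB hnoadj

lemma notMem_coveredVertices_of_mem {e : E} (he : e ∈ A) {v : V} (hv : v ∈ ε e) :
    v ∉ coveredVertices ε B := by
  rintro ⟨f, hf, hvf⟩
  exact hnoadj e he f hf (mgLineGraph_adj_iff.2 ⟨hAB.ne_of_mem he hf, v, hv, hvf⟩)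

lemma mem_of_mem_coveredVertices_of_notMem (hABS : A ∪ B = Sᶜ) {e : E} {u v : V}
    (hv : v ∈ ε e) (hvB : v ∉ coveredVertices ε B)
    (hu : u ∈ ε e) (huB : u ∈ coveredVertices ε B) : e ∈ S := by
  have heB : e ∉ B := fun he => hvB ⟨e, he, hv⟩
  have heA : e ∉ A := fun he => notMem_coveredVertices_of_mem hAB hnoadj he hu huB
  have heAB : e ∉ A ∪ B := by simp [heA, heB]
  simpa [hABS] using heAB

lemma mgMatchingCut_coveredVertices (hS : ∀ e ∈ S, ∀ f ∈ S, ¬ (MGLineGraph ε).Adj e f)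
    (hA : A.Nonempty) (hB : B.Nonempty) (hABS : A ∪ B = Sᶜ) :
    MGMatchingCut ε (coveredVertices ε B)ᶜ (coveredVertices ε B) := by
  refine ⟨?_, ?_, disjoint_compl_left, Set.compl_union_self _, ?_, ?_⟩
  · obtain ⟨e, he⟩ := hA
    exact ⟨_, notMem_coveredVertices_of_mem hAB hnoadj he (ε e).out_fst_mem⟩
  · obtain ⟨f, hf⟩ := hB
    exact ⟨_, f, hf, (ε f).out_fst_mem⟩
  · intro v hv
    refine (subsingleton_incident_of_independent hS v).anti ?_
    rintro e ⟨u, hu, he⟩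
    have hve : v ∈ ε e := he ▸ Sym2.mem_mk_left _ _
    exact ⟨mem_of_mem_coveredVertices_of_notMem hAB hnoadj hABS hve hv
      (he ▸ Sym2.mem_mk_right _ _) hu, hve⟩
  · intro v hv
    refine (subsingleton_incident_of_independent hS v).anti ?_
    rintro e ⟨u, hu, he⟩
    have hve : v ∈ ε e := he ▸ Sym2.mem_mk_left _ _
    exact ⟨mem_of_mem_coveredVertices_of_notMem hAB hnoadj hABS
      (he ▸ Sym2.mem_mk_right _ _) hu hve hv, hve⟩

end StableCut

theorem hasMGMatchingCut_of_simpleHasStableCut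
    (h : SimpleHasStableCut (MGLineGraph ε)) : HasMGMatchingCut ε := by
  obtain ⟨S, hS, A, B, hA, hB, hAB, hABS, hnoadj⟩ := h
  exact ⟨_, _, mgMatchingCut_coveredVertices hAB hnoadj hS hA hB hABS⟩

section MatchingCut

def crossingEdges (ε : E → Sym2 V) (A B : Set V) : Set E :=
  {e | ∃ a ∈ A, ∃ b ∈ B, ε e = s(a, b)}

lemma crossingEdges_comm (A B : Set V) : crossingEdges ε A B = crossingEdges ε B A := by
  ext e
  exact ⟨fun ⟨a, ha, b, hb, he⟩ => ⟨b, hb, a, ha, he.trans Sym2.eq_swap⟩,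
    fun ⟨b, hb, a, ha, he⟩ => ⟨a, ha, b, hb, he.trans Sym2.eq_swap⟩⟩

lemma exists_eq_of_mem_crossingEdges {A B : Set V} (hAB : Disjoint A B) {e : E}
    (he : e ∈ crossingEdges ε A B) {w : V} (hw : w ∈ ε e) (hwA : w ∈ A) :
    ∃ b ∈ B, ε e = s(w, b) := by
  obtain ⟨a, ha, b, hb, he⟩ := he
  rw [he, Sym2.mem_iff] at hw
  rcases hw with rfl | rfl
  · exact ⟨b, hb, he⟩
  · exact absurd hb (hAB.notMem_of_mem_left hwA)

lemma Sym2.mem_sym2_or_mem_sym2_or_eq {A B : Set V} (hmem : ∀ v, v ∈ A ∨ v ∈ B)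
    (z : Sym2 V) : (z ∈ A.sym2 ∨ z ∈ B.sym2) ∨ ∃ a ∈ A, ∃ b ∈ B, z = s(a, b) := by
  induction z using Sym2.ind with
  | _ x y =>
    rcases hmem x with hx | hx <;> rcases hmem y with hy | hy
    · exact Or.inl (Or.inl ⟨hx, hy⟩)
    · exact Or.inr ⟨x, hx, y, hy, rfl⟩
    · exact Or.inr ⟨y, hy, x, hx, Sym2.eq_swap⟩
    · exact Or.inl (Or.inr ⟨hx, hy⟩)

lemma Set.disjoint_sym2 {A B : Set V} (hAB : Disjoint A B) : Disjoint A.sym2 B.sym2 := by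
  refine Set.disjoint_left.2 fun z hA hB => ?_
  rw [Set.mem_sym2_iff_subset] at hA hB
  exact hAB.notMem_of_mem_left (hA z.out_fst_mem) (hB z.out_fst_mem)

namespace MGMatchingCut

variable {A B : Set V} (h : MGMatchingCut ε A B)
include h

lemma symm : MGMatchingCut ε B A :=
  ⟨h.2.1, h.1, h.2.2.1.symm, (Set.union_comm _ _).trans h.2.2.2.1, h.2.2.2.2.2, h.2.2.2.2.1⟩

lemma disjoint : Disjoint A B := h.2.2.1

lemma mem_or_mem (v : V) : v ∈ A ∨ v ∈ B :=
  (Set.mem_union v A B).1 (h.2.2.2.1 ▸ Set.mem_univ v)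

lemma subsingleton_left {v : V} (hv : v ∈ A) : {e : E | ∃ u ∈ B, ε e = s(v, u)}.Subsingleton :=
  h.2.2.2.2.1 v hv

lemma eq_of_mem_crossingEdges_of_mem_left {e f : E} (he : e ∈ crossingEdges ε A B)
    (hf : f ∈ crossingEdges ε A B) {w : V} (hwe : w ∈ ε e) (hwf : w ∈ ε f) (hwA : w ∈ A) :
    e = f :=
  h.subsingleton_left hwA (exists_eq_of_mem_crossingEdges h.disjoint he hwe hwA)
    (exists_eq_of_mem_crossingEdges h.disjoint hf hwf hwA)

lemma independent_crossingEdges :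
    ∀ e ∈ crossingEdges ε A B, ∀ f ∈ crossingEdges ε A B, ¬ (MGLineGraph ε).Adj e f := by
  intro e he f hf hadj
  obtain ⟨hne, w, hwe, hwf⟩ := mgLineGraph_adj_iff.1 hadj
  rcases h.mem_or_mem w with hwA | hwB
  · exact hne (h.eq_of_mem_crossingEdges_of_mem_left he hf hwe hwf hwA)
  · rw [crossingEdges_comm] at he hf
    exact hne (h.symm.eq_of_mem_crossingEdges_of_mem_left he hf hwe hwf hwB)

lemma nonempty_preimage_sym2_left (hdeg : ∀ v : V, 2 ≤ Set.ncard {e : E | v ∈ ε e}) :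
    (ε ⁻¹' A.sym2).Nonempty := by
  obtain ⟨v, hv⟩ := h.1
  have hinc : {e : E | v ∈ ε e}.Nontrivial :=
    (Set.one_lt_ncard_iff_nontrivial_and_finite.1 (hdeg v)).1
  obtain ⟨e, hve, hcross⟩ := Set.not_subset.1 fun hsub =>
    hinc.not_subsingleton ((h.subsingleton_left hv).anti hsub)
  obtain ⟨u, hu⟩ := Sym2.mem_iff_exists.1 hve
  have huA : u ∈ A := (h.mem_or_mem u).resolve_right fun huB => hcross ⟨u, huB, hu⟩
  exact ⟨e, by rw [Set.mem_preimage, hu, Set.mk_mem_sym2_iff]; exact ⟨hv, huA⟩⟩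

lemma preimage_sym2_union_preimage_sym2 :
    ε ⁻¹' A.sym2 ∪ ε ⁻¹' B.sym2 = (crossingEdges ε A B)ᶜ := by
  ext e
  simp only [Set.mem_union, Set.mem_preimage, Set.mem_compl_iff]
  constructor
  · rintro hsame ⟨a, ha, b, hb, he⟩
    rw [he, Set.mk_mem_sym2_iff, Set.mk_mem_sym2_iff] at hsame
    rcases hsame with hA | hB
    · exact h.disjoint.notMem_of_mem_left hA.2 hb
    · exact h.disjoint.notMem_of_mem_left ha hB.1
  · exact (Sym2.mem_sym2_or_mem_sym2_or_eq h.mem_or_mem (ε e)).resolve_right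

lemma simpleHasStableCut (hdeg : ∀ v : V, 2 ≤ Set.ncard {e : E | v ∈ ε e}) :
    SimpleHasStableCut (MGLineGraph ε) := by
  refine ⟨crossingEdges ε A B, h.independent_crossingEdges, ε ⁻¹' A.sym2, ε ⁻¹' B.sym2,
    h.nonempty_preimage_sym2_left hdeg, h.symm.nonempty_preimage_sym2_left hdeg,
    (Set.disjoint_sym2 h.disjoint).preimage ε, h.preimage_sym2_union_preimage_sym2, ?_⟩
  intro e he f hf hadj
  obtain ⟨-, w, hwe, hwf⟩ := mgLineGraph_adj_iff.1 hadj
  rw [Set.mem_preimage, Set.mem_sym2_iff_subset] at he hf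
  exact h.disjoint.notMem_of_mem_left (he hwe) (hf hwf)

end MGMatchingCut

end MatchingCut

end

theorem stmt15_general {V E : Type*} (ε : E → Sym2 V) :
    (SimpleHasStableCut (MGLineGraph ε) → HasMGMatchingCut ε) ∧
      ((HasMGMatchingCut ε ∧ ∀ v : V, 2 ≤ Set.ncard {e : E | v ∈ ε e}) →
        SimpleHasStableCut (MGLineGraph ε)) :=
  ⟨hasMGMatchingCut_of_simpleHasStableCut, fun ⟨⟨_, _, h⟩, hdeg⟩ => h.simpleHasStableCut hdeg⟩

/-- Let `G` be a multigraph with finite vertex type `V`, finite edge type `E`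
and endpoint map `ε` (each edge has two distinct endpoints).
(i) If the line graph `L(G)` has a stable cut, then `G` has a multigraph
matching cut. (ii) If `G` has a multigraph matching cut and every vertex is
incident to at least two edges, then `L(G)` has a stable cut. -/
theorem stmt15 {V E : Type*} [Fintype V] [Fintype E] (ε : E → Sym2 V)
    (hloopless : ∀ e : E, ¬ (ε e).IsDiag) :
    (SimpleHasStableCut (MGLineGraph ε) → HasMGMatchingCut ε) ∧
      ((HasMGMatchingCut ε ∧ ∀ v : V, 2 ≤ Set.ncard {e : E | v ∈ ε e}) →
        SimpleHasStableCut (MGLineGraph ε)) :=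
  stmt15_general ε
end
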